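/- Let G be a finite simple graph whose vertex set admits a partition V(G) = V₁ ∪ V₂ such that each induced subgraph G[V_i] (i ∈ {1,2}) contains at least two universal vertices of G[V_i], and suppose there is at least one edge of G with one endpoint in V₁ and the other in V₂. Then G is not 2-γ'MB-critical. -/
import Mathlib


/-- `D` is a dominating set of `G`: every vertex not in `D` has a neighbor in `D`. -/
def Dominating {V : Type*} (G : SimpleGraph V) (D : Set V) : Prop :=
  ∀ v, v ∉ D → ∃ d ∈ D, G.Adj d v

/-- Dominator wins the S-game on `G` within one move. -/
def WinsWithin1 {V : Type*} (G : SimpleGraph V) : Prop :=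
  ∀ s₁ : V, ∃ d₁, d₁ ≠ s₁ ∧ Dominating G {d₁}

/-- Dominator wins the S-game on `G` within two moves. -/
def WinsWithin2 {V : Type*} (G : SimpleGraph V) : Prop :=
  ∀ s₁ : V, ∃ d₁, d₁ ≠ s₁ ∧
    (Dominating G {d₁} ∨
      ∀ s₂, s₂ ∉ ({s₁, d₁} : Set V) →
        ∃ d₂, d₂ ∉ ({s₁, d₁, s₂} : Set V) ∧ Dominating G {d₁, d₂})

/-- `γ'MB(G) = 2`: Dominator wins the S-game within two moves but not within one. -/
def MBPrimeEqTwo {V : Type*} (G : SimpleGraph V) : Prop :=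
  WinsWithin2 G ∧ ¬ WinsWithin1 G

/-- `G` is `2`-`γ'MB`-critical: `γ'MB(G) = 2` and for every edge `e`, Dominator does not
win the S-game on `G - e` within two moves. -/
def Critical2 {V : Type*} (G : SimpleGraph V) : Prop :=
  MBPrimeEqTwo G ∧ ∀ u v : V, G.Adj u v → ¬ WinsWithin2 (G.deleteEdges {s(u, v)})

/-- `v` is a universal vertex of the subgraph of `G` induced on `C`:
`v ∈ C` and `v` is adjacent in `G` to every other vertex of `C`. -/
def UnivIn {V : Type*} (G : SimpleGraph V) (C : Set V) (v : V) : Prop :=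
  v ∈ C ∧ ∀ u ∈ C, u ≠ v → G.Adj v u

theorem stmt9 {V : Type*} [Fintype V] (G : SimpleGraph V) (V₁ V₂ : Set V)
    (hdisj : Disjoint V₁ V₂) (hunion : V₁ ∪ V₂ = Set.univ)
    (h₁ : ∃ u v, u ≠ v ∧ UnivIn G V₁ u ∧ UnivIn G V₁ v)
    (h₂ : ∃ u v, u ≠ v ∧ UnivIn G V₂ u ∧ UnivIn G V₂ v)
    (hedge : ∃ u ∈ V₁, ∃ v ∈ V₂, G.Adj u v) :
    ¬ Critical2 G := by

  rintro ⟨-, hcrit⟩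
  obtain ⟨u, hu, v, hv, huv⟩ := hedge
  obtain ⟨a₁, a₂, ha12, ha₁, ha₂⟩ := h₁
  obtain ⟨b₁, b₂, hb12, hb₁, hb₂⟩ := h₂
  apply hcrit u v huv
  set G' := G.deleteEdges {s(u, v)} with hG'
  have hnd := Set.disjoint_left.mp hdisj
  have adj1 : ∀ a x : V, a ∈ V₁ → x ∈ V₁ → G.Adj a x → G'.Adj a x := by
    intro a x ha hx hadj
    rw [hG', SimpleGraph.deleteEdges_adj]
    refine ⟨hadj, ?_⟩
    simp only [Set.mem_singleton_iff, Sym2.eq_iff]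
    rintro (⟨rfl, rfl⟩ | ⟨rfl, rfl⟩)
    · exact hnd hx hv
    · exact hnd ha hv
  have adj2 : ∀ b x : V, b ∈ V₂ → x ∈ V₂ → G.Adj b x → G'.Adj b x := by
    intro b x hb hx hadj
    rw [hG', SimpleGraph.deleteEdges_adj]
    refine ⟨hadj, ?_⟩
    simp only [Set.mem_singleton_iff, Sym2.eq_iff]
    rintro (⟨rfl, rfl⟩ | ⟨rfl, rfl⟩)
    · exact hnd hu hb
    · exact hnd hu hx
  have dompair : ∀ a b : V, UnivIn G V₁ a → UnivIn G V₂ b → Dominating G' {a, b} := by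
    rintro a b ⟨haV, haU⟩ ⟨hbV, hbU⟩ x hx
    simp only [Set.mem_insert_iff, Set.mem_singleton_iff, not_or] at hx
    have hxU : x ∈ V₁ ∪ V₂ := hunion ▸ Set.mem_univ x
    cases hxU with
    | inl h => exact ⟨a, Set.mem_insert _ _, adj1 a x haV h (haU x h hx.1)⟩
    | inr h => exact ⟨b, Set.mem_insert_iff.mpr (Or.inr rfl), adj2 b x hbV h (hbU x h hx.2)⟩
  intro s₁
  by_cases hs : s₁ = b₁ ∨ s₁ = b₂
  · obtain ⟨d₁, hd₁U, hd₁ne⟩ : ∃ d₁, UnivIn G V₂ d₁ ∧ d₁ ≠ s₁ := by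
      rcases hs with rfl | rfl
      · exact ⟨b₂, hb₂, hb12.symm⟩
      · exact ⟨b₁, hb₁, hb12⟩
    refine ⟨d₁, hd₁ne, Or.inr ?_⟩
    intro s₂ hs₂
    obtain ⟨d₂, hd₂U, hd₂ne⟩ : ∃ d₂, UnivIn G V₁ d₂ ∧ d₂ ≠ s₂ := by
      by_cases h : s₂ = a₁
      · exact ⟨a₂, ha₂, by rw [h]; exact ha12.symm⟩
      · exact ⟨a₁, ha₁, fun h' => h h'.symm⟩
    refine ⟨d₂, ?_, ?_⟩
    · simp only [Set.mem_insert_iff, Set.mem_singleton_iff, not_or]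
      refine ⟨?_, ?_, hd₂ne⟩
      · rintro rfl
        rcases hs with rfl | rfl
        · exact hnd hd₂U.1 hb₁.1
        · exact hnd hd₂U.1 hb₂.1
      · rintro rfl; exact hnd hd₂U.1 hd₁U.1
    · rw [Set.pair_comm]
      exact dompair d₂ d₁ hd₂U hd₁U
  · push_neg at hs
    obtain ⟨d₁, hd₁U, hd₁ne⟩ : ∃ d₁, UnivIn G V₁ d₁ ∧ d₁ ≠ s₁ := by
      by_cases h : s₁ = a₁
      · exact ⟨a₂, ha₂, by rw [h]; exact ha12.symm⟩
      · exact ⟨a₁, ha₁, fun h' => h h'.symm⟩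
    refine ⟨d₁, hd₁ne, Or.inr ?_⟩
    intro s₂ hs₂
    obtain ⟨d₂, hd₂U, hd₂ne, hd₂or⟩ :
        ∃ d₂, UnivIn G V₂ d₂ ∧ d₂ ≠ s₂ ∧ (d₂ = b₁ ∨ d₂ = b₂) := by
      by_cases h : s₂ = b₁
      · exact ⟨b₂, hb₂, by rw [h]; exact hb12.symm, Or.inr rfl⟩
      · exact ⟨b₁, hb₁, fun h' => h h'.symm, Or.inl rfl⟩
    refine ⟨d₂, ?_, dompair d₁ d₂ hd₁U hd₂U⟩
    simp only [Set.mem_insert_iff, Set.mem_singleton_iff, not_or]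
    refine ⟨?_, ?_, hd₂ne⟩
    · rintro rfl
      rcases hd₂or with rfl | rfl
      · exact hs.1 rfl
      · exact hs.2 rfl
    · rintro rfl; exact hnd hd₁U.1 hd₂U.1
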